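/- arXiv:2504.18330 — 2 statements merged into one kernel-verified Lean document; each statement's English description precedes it below -/
import Mathlib

section
/- Let V : ℝⁿ × ℝⁿ → ℝ≥0 and suppose there exist class K∞ functions α1, α2 with α1(|x−x̂|) ≤ V(x,x̂) ≤ α2(|x−x̂|) for all x, x̂, and suppose along two solutions x(t), x̂(t) of a system the function t ↦ V(x(t),x̂(t)) is differentiable with derivative ≤ −κ·V(x(t),x̂(t)) + σ(‖w−ŵ‖) where κ > 0 and σ is class K∞. Then |x(t) − x̂(t)| ≤ α1⁻¹(2e^{−κt}α2(|x(0)−x̂(0)|)) + α1⁻¹((2/κ)σ(‖w−ŵ‖)) for all t ≥ 0. -/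
/-!
Gronwall's inequality applied to the dissipation bound `V' ≤ -κ V + σ(s)` gives
`V(t) ≤ e^{-κt} V(0) + σ(s)/κ`. Sandwiching with `α1(|x - x̂|) ≤ V ≤ α2(|x - x̂|)` bounds
`α1(|x(t) - x̂(t)|)` by a sum `a + b ≤ 2 max a b`, and inverting `α1` splits the bound into
`α1⁻¹(2a) + α1⁻¹(2b)`.
-/

open Real Set

theorem le_exp_mul_add_div_of_hasDerivAt_le {g D : ℝ → ℝ} {κ c : ℝ} (hκ : 0 < κ) (hc : 0 ≤ c)
    (hD : ∀ t ≥ (0:ℝ), HasDerivAt g (D t) t) (hDle : ∀ t ≥ (0:ℝ), D t ≤ -κ * g t + c)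
    {t : ℝ} (ht : 0 ≤ t) :
    g t ≤ exp (-κ * t) * g 0 + c / κ := by
  have hgron : g t ≤ gronwallBound (g 0) (-κ) c (t - 0) :=
    le_gronwallBound_of_liminf_deriv_right_le (f' := D)
      (fun τ hτ => (hD τ hτ.1).continuousAt.continuousWithinAt)
      (fun τ hτ _ hr => (hD τ hτ.1).hasDerivWithinAt.liminf_right_slope_le hr)
      le_rfl (fun τ hτ => hDle τ hτ.1) t ⟨ht, le_rfl⟩
  rw [gronwallBound_of_K_ne_0 (neg_ne_zero.2 hκ.ne'), sub_zero] at hgron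
  have hexp : 0 < exp (-κ * t) := exp_pos _
  have hc' : 0 ≤ c / κ := div_nonneg hc hκ.le
  calc g t ≤ g 0 * exp (-κ * t) + c / -κ * (exp (-κ * t) - 1) := hgron
    _ = exp (-κ * t) * g 0 + c / κ - c / κ * exp (-κ * t) := by rw [div_neg]; ring
    _ ≤ exp (-κ * t) * g 0 + c / κ := by nlinarith

section Inverse

variable {α αinv : ℝ → ℝ} (hmono : StrictMonoOn α (Ici 0)) (hmaps : MapsTo αinv (Ici 0) (Ici 0))
  (hinv : RightInvOn αinv α (Ici 0))
include hmono hmaps hinv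

theorem StrictMonoOn.le_of_apply_le_of_rightInvOn {r c : ℝ} (hr : 0 ≤ r) (hc : 0 ≤ c)
    (h : α r ≤ c) : r ≤ αinv c :=
  (hmono.le_iff_le hr (hmaps hc)).1 (by rwa [hinv hc])

theorem StrictMonoOn.le_add_of_apply_le_add_of_rightInvOn {r a b : ℝ} (hr : 0 ≤ r)
    (ha : 0 ≤ a) (hb : 0 ≤ b) (h : α r ≤ a + b) : r ≤ αinv (2 * a) + αinv (2 * b) := by
  rcases le_total b a with hba | hab
  · have := hmono.le_of_apply_le_of_rightInvOn hmaps hinv hr (by positivity)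
      (h.trans (by linarith : a + b ≤ 2 * a))
    linarith [mem_Ici.1 (hmaps (by positivity : (0:ℝ) ≤ 2 * b))]
  · have := hmono.le_of_apply_le_of_rightInvOn hmaps hinv hr (by positivity)
      (h.trans (by linarith : a + b ≤ 2 * b))
    linarith [mem_Ici.1 (hmaps (by positivity : (0:ℝ) ≤ 2 * a))]

end Inverse

theorem stmt4_general {n : ℕ} (x xh : ℝ → EuclideanSpace ℝ (Fin n))
    (V : EuclideanSpace ℝ (Fin n) × EuclideanSpace ℝ (Fin n) → ℝ)
    (α1 α2 σ α1inv : ℝ → ℝ) (κ s : ℝ) (hκ : 0 < κ) (hs : 0 ≤ s)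
    -- α1 class K∞ with inverse α1inv:
    (hα1mono : StrictMonoOn α1 (Set.Ici 0))
    (hα10 : α1 0 = 0)
    (hinv_nonneg : ∀ a ≥ (0:ℝ), 0 ≤ α1inv a)
    (hright : ∀ a ≥ (0:ℝ), α1 (α1inv a) = a)
    -- σ class K∞:
    (hσmono : StrictMonoOn σ (Set.Ici 0))
    (hσ0 : σ 0 = 0)
    -- sandwich bounds:
    (hsand : ∀ a b : EuclideanSpace ℝ (Fin n), α1 ‖a - b‖ ≤ V (a, b) ∧ V (a, b) ≤ α2 ‖a - b‖)
    -- derivative of the Lyapunov function along the trajectories: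
    (D : ℝ → ℝ)
    (hD : ∀ t ≥ (0:ℝ), HasDerivAt (fun τ => V (x τ, xh τ)) (D t) t)
    (hDle : ∀ t ≥ (0:ℝ), D t ≤ -κ * V (x t, xh t) + σ s) :
    ∀ t ≥ (0:ℝ),
      ‖x t - xh t‖ ≤ α1inv (2 * Real.exp (-κ * t) * α2 ‖x 0 - xh 0‖)
        + α1inv ((2 / κ) * σ s) := by
  intro t ht
  have hσs : 0 ≤ σ s := hσ0 ▸ hσmono.monotoneOn self_mem_Ici hs hs
  have hα2 : 0 ≤ α2 ‖x 0 - xh 0‖ :=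
    calc 0 = α1 0 := hα10.symm
      _ ≤ α1 ‖x 0 - xh 0‖ := hα1mono.monotoneOn self_mem_Ici (norm_nonneg _) (norm_nonneg _)
      _ ≤ α2 ‖x 0 - xh 0‖ := (hsand _ _).1.trans (hsand _ _).2
  have hV := le_exp_mul_add_div_of_hasDerivAt_le hκ hσs hD hDle ht
  have key := hα1mono.le_add_of_apply_le_add_of_rightInvOn (fun a ha => hinv_nonneg a ha)
    (fun a ha => hright a ha) (norm_nonneg _) (by positivity) (by positivity) <|
    calc α1 ‖x t - xh t‖ ≤ V (x t, xh t) := (hsand _ _).1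
      _ ≤ exp (-κ * t) * V (x 0, xh 0) + σ s / κ := hV
      _ ≤ exp (-κ * t) * α2 ‖x 0 - xh 0‖ + σ s / κ := by
        gcongr
        exact (hsand _ _).2
  convert key using 3 <;> ring

/-- Incremental ISS bound: if `α1(|x-x̂|) ≤ V(x,x̂) ≤ α2(|x-x̂|)` with `α1, α2` class `K∞`,
and along two trajectories `t ↦ V(x(t),x̂(t))` is differentiable with derivative
`≤ -κ V(x(t),x̂(t)) + σ(s)` (with `s = ‖w - ŵ‖`), then
`|x(t)-x̂(t)| ≤ α1⁻¹(2 e^{-κt} α2(|x(0)-x̂(0)|)) + α1⁻¹((2/κ) σ(s))`. -/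
theorem stmt4 {n : ℕ} (x xh : ℝ → EuclideanSpace ℝ (Fin n))
    (V : EuclideanSpace ℝ (Fin n) × EuclideanSpace ℝ (Fin n) → ℝ)
    (α1 α2 σ α1inv : ℝ → ℝ) (κ s : ℝ) (hκ : 0 < κ) (hs : 0 ≤ s)
    -- α1 class K∞ with inverse α1inv:
    (hα1cont : ContinuousOn α1 (Set.Ici 0)) (hα1mono : StrictMonoOn α1 (Set.Ici 0))
    (hα10 : α1 0 = 0) (hα1unb : ∀ M : ℝ, ∃ r ≥ (0:ℝ), M ≤ α1 r)
    (hinv_nonneg : ∀ a ≥ (0:ℝ), 0 ≤ α1inv a)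
    (hleft : ∀ r ≥ (0:ℝ), α1inv (α1 r) = r)
    (hright : ∀ a ≥ (0:ℝ), α1 (α1inv a) = a)
    -- α2 class K∞:
    (hα2cont : ContinuousOn α2 (Set.Ici 0)) (hα2mono : StrictMonoOn α2 (Set.Ici 0))
    (hα20 : α2 0 = 0) (hα2unb : ∀ M : ℝ, ∃ r ≥ (0:ℝ), M ≤ α2 r)
    -- σ class K∞:
    (hσcont : ContinuousOn σ (Set.Ici 0)) (hσmono : StrictMonoOn σ (Set.Ici 0))
    (hσ0 : σ 0 = 0) (hσunb : ∀ M : ℝ, ∃ r ≥ (0:ℝ), M ≤ σ r)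
    -- sandwich bounds:
    (hsand : ∀ a b : EuclideanSpace ℝ (Fin n), α1 ‖a - b‖ ≤ V (a, b) ∧ V (a, b) ≤ α2 ‖a - b‖)
    -- derivative of the Lyapunov function along the trajectories:
    (D : ℝ → ℝ)
    (hD : ∀ t ≥ (0:ℝ), HasDerivAt (fun τ => V (x τ, xh τ)) (D t) t)
    (hDle : ∀ t ≥ (0:ℝ), D t ≤ -κ * V (x t, xh t) + σ s) :
    ∀ t ≥ (0:ℝ),
      ‖x t - xh t‖ ≤ α1inv (2 * Real.exp (-κ * t) * α2 ‖x 0 - xh 0‖)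
        + α1inv ((2 / κ) * σ s) :=
  stmt4_general x xh V α1 α2 σ α1inv κ s hκ hs hα1mono hα10 hinv_nonneg hright hσmono hσ0 hsand D hD
    hDle
end

section
/- Let h : X → ℝ be continuously differentiable on a compact set X ⊂ ℝⁿ with h = 0 on ∂X and h > 0 on the interior of X. Suppose x : [0,T] → ℝⁿ is a solution of ẋ = F(x) with x(0) ∈ int(X) and that along the solution d/dt h(x(t)) ≥ −μ·h(x(t)) for some μ > 0 whenever x(t) ∈ X. Then h(x(t)) ≥ e^{−μt}·h(x(0)) > 0 for all t ∈ [0,T], hence x(t) ∈ int(X) for all t ∈ [0,T]. -/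
/-!
The product `e^{μt} h(x(t))` is nondecreasing as long as the trajectory stays in `X`,
which gives the lower bound `e^{-μt} h(x(0))` there. If the trajectory ever left `int X`,
then at the first exit time it would sit on `∂X`, where `h = 0`, while the lower bound is
still available up to that time and is strictly positive.
-/

open Set

theorem exp_neg_mul_mul_le_of_hasDerivAt {g g' : ℝ → ℝ} {μ a b : ℝ} (hab : a ≤ b)
    (hg : ContinuousOn g (Icc a b)) (hderiv : ∀ s ∈ Ioo a b, HasDerivAt g (g' s) s)
    (hineq : ∀ s ∈ Ioo a b, -μ * g s ≤ g' s) :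
    Real.exp (-μ * (b - a)) * g a ≤ g b := by
  have hmono : MonotoneOn (fun s => Real.exp (μ * s) * g s) (Icc a b) := by
    refine monotoneOn_of_hasDerivWithinAt_nonneg (f' := fun s =>
        Real.exp (μ * s) * (μ * g s + g' s)) (convex_Icc a b) (by fun_prop) ?_ ?_
    · intro s hs
      rw [interior_Icc] at hs
      have hexp : HasDerivAt (fun s => Real.exp (μ * s)) (Real.exp (μ * s) * μ) s := by
        simpa using ((hasDerivAt_id s).const_mul μ).exp
      exact ((hexp.mul (hderiv s hs)).congr_deriv (by ring)).hasDerivWithinAt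
    · intro s hs
      rw [interior_Icc] at hs
      have : 0 ≤ μ * g s + g' s := by linarith [hineq s hs]
      positivity
  have hab' := hmono (left_mem_Icc.2 hab) (right_mem_Icc.2 hab) hab
  calc Real.exp (-μ * (b - a)) * g a
      = Real.exp (-(μ * b)) * (Real.exp (μ * a) * g a) := by
        rw [← mul_assoc, ← Real.exp_add]; congr 2; ring
    _ ≤ Real.exp (-(μ * b)) * (Real.exp (μ * b) * g b) := by gcongr
    _ = g b := by rw [← mul_assoc, ← Real.exp_add]; simp

theorem exists_first_exit {E : Type*} [TopologicalSpace E] {x : ℝ → E} {U : Set E}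
    {a t : ℝ} (hU : IsOpen U) (hx : ContinuousOn x (Icc a t)) (hat : a ≤ t)
    (ha : x a ∈ U) (ht : x t ∉ U) :
    ∃ τ ∈ Ioc a t, x τ ∈ frontier U ∧ ∀ s ∈ Ico a τ, x s ∈ U := by
  set S := Icc a t ∩ x ⁻¹' Uᶜ
  have hS : IsClosed S := hx.preimage_isClosed_of_isClosed isClosed_Icc hU.isClosed_compl
  have hSne : S.Nonempty := ⟨t, right_mem_Icc.2 hat, ht⟩
  have hSbdd : BddBelow S := ⟨a, fun s hs => hs.1.1⟩
  obtain ⟨⟨haτ, hτt⟩, hτU⟩ := hS.csInf_mem hSne hSbdd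
  have hbefore : ∀ s ∈ Ico a (sInf S), x s ∈ U := fun s hs => by
    by_contra hsU
    exact notMem_of_lt_csInf hs.2 hSbdd ⟨⟨hs.1, hs.2.le.trans hτt⟩, hsU⟩
  have hlt : a < sInf S := haτ.lt_of_ne fun h => hτU (h ▸ ha)
  refine ⟨sInf S, ⟨hlt, hτt⟩, ?_, hbefore⟩
  rw [hU.frontier_eq]
  refine ⟨closure_mono (image_subset_iff.2 hbefore) ?_, hτU⟩
  refine ContinuousWithinAt.mem_closure_image ?_ (by simp [closure_Ico hlt.ne, hlt.le])
  exact (hx _ ⟨haτ, hτt⟩).mono fun s hs => ⟨hs.1, hs.2.le.trans hτt⟩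

theorem stmt8_general {n : ℕ} (X : Set (EuclideanSpace ℝ (Fin n)))
    (h : EuclideanSpace ℝ (Fin n) → ℝ)
    (F : EuclideanSpace ℝ (Fin n) → EuclideanSpace ℝ (Fin n))
    (x : ℝ → EuclideanSpace ℝ (Fin n)) (μ T : ℝ)
    (hC1 : ContDiff ℝ 1 h)
    (hboundary : ∀ y ∈ frontier X, h y = 0)
    (hinterior : ∀ y ∈ interior X, 0 < h y)
    (hsol : ∀ t, HasDerivAt x (F (x t)) t)
    (hx0 : x 0 ∈ interior X)
    (hbar : ∀ t ∈ Icc (0:ℝ) T, x t ∈ X →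
      -μ * h (x t) ≤ fderiv ℝ h (x t) (F (x t))) :
    ∀ t ∈ Icc (0:ℝ) T,
      Real.exp (-μ * t) * h (x 0) ≤ h (x t) ∧ 0 < h (x t) ∧ x t ∈ interior X := by
  have hx : Continuous x := continuous_iff_continuousAt.2 fun t => (hsol t).continuousAt
  have hhx : ∀ s, HasDerivAt (h ∘ x) (fderiv ℝ h (x s) (F (x s))) s := fun s =>
    ((hC1.differentiable one_ne_zero) (x s)).hasFDerivAt.comp_hasDerivAt s (hsol s)
  have hpos : ∀ t, 0 < Real.exp (-μ * t) * h (x 0) := fun t => by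
    have := hinterior _ hx0; positivity
  have hbound : ∀ t ∈ Icc 0 T, (∀ s ∈ Ioo 0 t, x s ∈ X) →
      Real.exp (-μ * t) * h (x 0) ≤ h (x t) := fun t ht hX => by
    simpa using exp_neg_mul_mul_le_of_hasDerivAt (g := h ∘ x) ht.1
      (fun s _ => (hhx s).continuousAt.continuousWithinAt) (fun s _ => hhx s)
      fun s hs => hbar s ⟨hs.1.le, hs.2.le.trans ht.2⟩ (hX s hs)
  have hstay : ∀ t ∈ Icc 0 T, x t ∈ interior X := by
    intro t ht
    by_contra hout
    obtain ⟨τ, hτ, hτfr, hbefore⟩ :=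
      exists_first_exit isOpen_interior hx.continuousOn ht.1 hx0 hout
    have hle := hbound τ ⟨hτ.1.le, hτ.2.trans ht.2⟩
      fun s hs => interior_subset (hbefore s (Ioo_subset_Ico_self hs))
    exact ((hpos τ).trans_le hle).ne' (hboundary _ (frontier_interior_subset hτfr))
  intro t ht
  have hle := hbound t ht fun s hs => interior_subset (hstay s ⟨hs.1.le, hs.2.le.trans ht.2⟩)
  exact ⟨hle, (hpos t).trans_le hle, hstay t ht⟩

/-- Forward invariance from a control barrier function: if `h` is `C¹`, vanishing on the
boundary of a compact set `X` and positive on its interior, and along a solution of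
`ẋ = F(x)` one has `d/dt h(x(t)) ≥ -μ h(x(t))` whenever `x(t) ∈ X`, then starting from
the interior of `X`, `h(x(t)) ≥ e^{-μt} h(x(0)) > 0` and `x(t)` remains in `int(X)`. -/
theorem stmt8 {n : ℕ} (X : Set (EuclideanSpace ℝ (Fin n)))
    (h : EuclideanSpace ℝ (Fin n) → ℝ)
    (F : EuclideanSpace ℝ (Fin n) → EuclideanSpace ℝ (Fin n))
    (x : ℝ → EuclideanSpace ℝ (Fin n)) (μ T : ℝ) (hμ : 0 < μ) (hT : 0 ≤ T)
    (hXcompact : IsCompact X)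
    (hC1 : ContDiff ℝ 1 h)
    (hboundary : ∀ y ∈ frontier X, h y = 0)
    (hinterior : ∀ y ∈ interior X, 0 < h y)
    (hsol : ∀ t, HasDerivAt x (F (x t)) t)
    (hx0 : x 0 ∈ interior X)
    (hbar : ∀ t ∈ Icc (0:ℝ) T, x t ∈ X →
      -μ * h (x t) ≤ fderiv ℝ h (x t) (F (x t))) :
    ∀ t ∈ Icc (0:ℝ) T,
      Real.exp (-μ * t) * h (x 0) ≤ h (x t) ∧ 0 < h (x t) ∧ x t ∈ interior X :=
  stmt8_general X h F x μ T hC1 hboundary hinterior hsol hx0 hbar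
end
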